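/- Suppose a vehicle route R = (v₁,...,vₙ) with n ≥ 3 is traversed at constant speed ν > 0, where Δ(i) is the cumulative distance from v₁ to vᵢ, S_{ij} is the cumulative service time from vᵢ through v_{j-1}, each node vᵢ has time window [e_{vᵢ}, l_{vᵢ}], and the vehicle may wait at nodes (departing node vᵢ no earlier than max(arrival time, e_{vᵢ}) plus service time). Then there exists a feasible schedule at speed ν respecting all time windows if and only if for every pair i < j: (Δ(j) − Δ(i))/ν + S_{ij} ≤ l_{vⱼ} − e_{vᵢ}. -/

import Mathlib

/-!
Set `w k = s k + d k / ν`, the least time between the starts of service at consecutive nodes.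
Any feasible schedule starts service at `vⱼ` at least `∑_{i ≤ k < j} w k` after it does at `vᵢ`,
which gives the pairwise condition. Conversely, the schedule that never waits longer than
necessary starts service at `vⱼ` at a time of the form `e i + ∑_{i ≤ k < j} w k` with `i ≤ j`,
so the pairwise condition is exactly what keeps it inside the time windows.
-/

open Finset

section Schedule

variable {α : Type*} [AddCommMonoid α] [LinearOrder α]

def earliestSchedule (e w : ℕ → α) : ℕ → α
  | 0 => e 0
  | j + 1 => max (e (j + 1)) (earliestSchedule e w j + w j)

lemma earliestSchedule_eq_add_sum (e w : ℕ → α) (j : ℕ) :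
    ∃ i ≤ j, earliestSchedule e w j = e i + ∑ k ∈ Ico i j, w k := by
  induction j with
  | zero => exact ⟨0, le_rfl, by simp [earliestSchedule]⟩
  | succ j ih =>
    obtain ⟨i, hij, hi⟩ := ih
    rcases max_choice (e (j + 1)) (earliestSchedule e w j + w j) with h | h
    · exact ⟨j + 1, le_rfl, by simp [earliestSchedule, h]⟩
    · refine ⟨i, hij.trans j.le_succ, ?_⟩
      rw [earliestSchedule, h, hi, sum_Ico_succ_top hij, add_assoc]

lemma add_sum_Ico_le_of_chain [IsOrderedAddMonoid α] {n : ℕ} {t w : ℕ → α}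
    (ht : ∀ k, k + 1 < n → t k + w k ≤ t (k + 1)) {i j : ℕ} (hij : i ≤ j) (hjn : j < n) :
    t i + ∑ k ∈ Ico i j, w k ≤ t j := by
  induction j, hij using Nat.le_induction with
  | base => simp
  | succ j hij ih =>
    calc t i + ∑ k ∈ Ico i (j + 1), w k = t i + ∑ k ∈ Ico i j, w k + w j := by
          rw [sum_Ico_succ_top hij, add_assoc]
      _ ≤ t j + w j := by gcongr; exact ih (by omega)
      _ ≤ t (j + 1) := ht j hjn

theorem exists_schedule_iff_forall_add_sum_le [IsOrderedAddMonoid α] (n : ℕ) (e l w : ℕ → α)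
    (hel : ∀ i, e i ≤ l i) :
    (∃ t : ℕ → α, (∀ i < n, e i ≤ t i ∧ t i ≤ l i) ∧ ∀ i, i + 1 < n → t i + w i ≤ t (i + 1)) ↔
      ∀ i j, i < j → j < n → e i + ∑ k ∈ Ico i j, w k ≤ l j := by
  constructor
  · rintro ⟨t, hwin, hchain⟩ i j hij hjn
    calc e i + ∑ k ∈ Ico i j, w k ≤ t i + ∑ k ∈ Ico i j, w k :=
          by gcongr; exact (hwin i (hij.trans hjn)).1
      _ ≤ t j := add_sum_Ico_le_of_chain hchain hij.le hjn
      _ ≤ l j := (hwin j hjn).2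
  · intro h
    refine ⟨earliestSchedule e w, fun j hjn => ⟨?_, ?_⟩, fun j _ => ?_⟩
    · cases j <;> simp [earliestSchedule]
    · obtain ⟨i, hij, hi⟩ := earliestSchedule_eq_add_sum e w j
      rw [hi]
      rcases hij.lt_or_eq with hij | rfl
      · exact h i j hij hjn
      · simpa using hel i
    · exact le_max_right _ _

end Schedule

theorem feasible_schedule_iff_pairwise_speed_condition_general
    (n : ℕ) (ν : ℝ)
    (d s e l : ℕ → ℝ)
    (hel : ∀ i, e i ≤ l i)
    (Δ : ℕ → ℝ) (hΔ : ∀ i, Δ i = ∑ m ∈ Finset.range i, d m)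
    (S : ℕ → ℕ → ℝ) (hS : ∀ i j, S i j = ∑ k ∈ Finset.Ico i j, s k) :
    (∃ t : ℕ → ℝ, (∀ i < n, e i ≤ t i ∧ t i ≤ l i) ∧
        ∀ i, i + 1 < n → t i + s i + d i / ν ≤ t (i + 1)) ↔
    (∀ i j, i < j → j < n → (Δ j - Δ i) / ν + S i j ≤ l j - e i) := by
  have hgap : ∀ i j, i ≤ j →
      (Δ j - Δ i) / ν + S i j = ∑ k ∈ Ico i j, (s k + d k / ν) := by
    intro i j hij
    rw [hΔ, hΔ, hS, ← sum_Ico_eq_sub _ hij, sum_div, sum_add_distrib, add_comm]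
  simp only [add_assoc]
  rw [exists_schedule_iff_forall_add_sum_le n e l _ hel]
  refine forall₄_congr fun i j hij _ => ?_
  rw [hgap i j hij.le, le_sub_iff_add_le']

theorem feasible_schedule_iff_pairwise_speed_condition
    (n : ℕ) (hn : 3 ≤ n) (ν : ℝ) (hν : 0 < ν)
    (d s e l : ℕ → ℝ)
    (hd : ∀ i, 0 ≤ d i) (hs : ∀ i, 0 ≤ s i) (hel : ∀ i, e i ≤ l i)
    (Δ : ℕ → ℝ) (hΔ : ∀ i, Δ i = ∑ m ∈ Finset.range i, d m)
    (S : ℕ → ℕ → ℝ) (hS : ∀ i j, S i j = ∑ k ∈ Finset.Ico i j, s k) :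
    (∃ t : ℕ → ℝ, (∀ i < n, e i ≤ t i ∧ t i ≤ l i) ∧
        ∀ i, i + 1 < n → t i + s i + d i / ν ≤ t (i + 1)) ↔
    (∀ i j, i < j → j < n → (Δ j - Δ i) / ν + S i j ≤ l j - e i) :=
  feasible_schedule_iff_pairwise_speed_condition_general n ν d s e l hel Δ hΔ S hS
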